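/- arXiv:2502.02570 — 2 statements merged into one kernel-verified Lean document; each statement's English description precedes it below -/
import Mathlib

section
/- Consider N components with NASG parameters satisfying p_{∞,k} = 0 and b_k = 0 for all k ≥ 2, mass fractions Y_k ≥ 0, common temperature T and pressure p with p > 0 and p + p_{∞,1} > 0. Assume for each k: e_k = q_k + C_{v,k} T (p + γ_k p_{∞,k})/(p + p_{∞,k}) and v_k = b_k + C_{v,k}(γ_k − 1)T/(p + p_{∞,k}), and let v = Σ_k Y_k v_k, e = Σ_k Y_k e_k, with C̄_v = Σ_k Y_k C_{v,k}, C̄_p = Σ_k Y_k γ_k C_{v,k}, q̄ = Σ_k Y_k q_k, b̄ = Σ_k Y_k b_k, C_{p,1} = γ_1 C_{v,1}, and assume v ≠ b̄ and T ≠ 0. Define S = (e − q̄)/(v − b̄), ã = C̄_v, b̃ = S(C̄_p − C̄_v) − p_{∞,1} C̄_v − p_{∞,1} Y_1 (C_{p,1} − C_{v,1}), c̃ = S p_{∞,1} [ C̄_p − C̄_v − Y_1(C_{p,1} − C_{v,1}) ]. Then the mixture pressure satisfies the quadratic equation ã p² − b̃ p − c̃ = 0. -/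
open Finset in
/-- **The mixture pressure of the four-equation NASG model satisfies the
quadratic equation ã p² − b̃ p − c̃ = 0** with
ã = C̄_v, b̃ = S(C̄_p − C̄_v) − p_{∞,1}C̄_v − p_{∞,1}Y₁(C_{p,1} − C_{v,1}),
c̃ = S p_{∞,1}[C̄_p − C̄_v − Y₁(C_{p,1} − C_{v,1})], S = (e − q̄)/(v − b̄),
where only component 1 (the liquid) has nonzero p∞ and covolume b. -/
theorem mixture_pressure_quadratic
    (N : ℕ) (hN : 0 < N)
    (γ Cv pinf q b Y ek vk : Fin N → ℝ) (T p v e : ℝ)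
    (hgas : ∀ k : Fin N, k ≠ ⟨0, hN⟩ → pinf k = 0 ∧ b k = 0)
    (hY : ∀ k, 0 ≤ Y k)
    (hp : 0 < p) (hpp1 : 0 < p + pinf ⟨0, hN⟩)
    (hek : ∀ k, ek k = q k + Cv k * T * (p + γ k * pinf k) / (p + pinf k))
    (hvk : ∀ k, vk k = b k + Cv k * (γ k - 1) * T / (p + pinf k))
    (hv : v = ∑ k, Y k * vk k) (he : e = ∑ k, Y k * ek k)
    (hvb : v ≠ ∑ k, Y k * b k) (hT : T ≠ 0) :
    (∑ k, Y k * Cv k) * p ^ 2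
      - ( ((e - ∑ k, Y k * q k) / (v - ∑ k, Y k * b k))
            * ((∑ k, Y k * (γ k * Cv k)) - ∑ k, Y k * Cv k)
          - pinf ⟨0, hN⟩ * (∑ k, Y k * Cv k)
          - pinf ⟨0, hN⟩ * Y ⟨0, hN⟩ * (γ ⟨0, hN⟩ * Cv ⟨0, hN⟩ - Cv ⟨0, hN⟩) ) * p
      - ( ((e - ∑ k, Y k * q k) / (v - ∑ k, Y k * b k)) * pinf ⟨0, hN⟩
            * ((∑ k, Y k * (γ k * Cv k)) - (∑ k, Y k * Cv k)
                - Y ⟨0, hN⟩ * (γ ⟨0, hN⟩ * Cv ⟨0, hN⟩ - Cv ⟨0, hN⟩)) )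
      = 0 := by
  set i0 : Fin N := ⟨0, hN⟩ with hi0
  have hp' : p ≠ 0 := ne_of_gt hp
  have hppi : p + pinf i0 ≠ 0 := ne_of_gt hpp1
  have hD0 : v - (∑ k, Y k * b k) ≠ 0 := sub_ne_zero.mpr hvb
  have hE : e - (∑ k, Y k * q k)
      = T * (∑ k, Y k * Cv k)
        + Y i0 * Cv i0 * (γ i0 - 1) * pinf i0 * T / (p + pinf i0) := by
    have h1 : e - (∑ k, Y k * q k) - T * (∑ k, Y k * Cv k)
        = ∑ k, (Y k * ek k - Y k * q k - T * (Y k * Cv k)) := by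
      rw [he, Finset.mul_sum, ← Finset.sum_sub_distrib, ← Finset.sum_sub_distrib]
    have h2 : (∑ k, (Y k * ek k - Y k * q k - T * (Y k * Cv k)))
        = Y i0 * Cv i0 * (γ i0 - 1) * pinf i0 * T / (p + pinf i0) := by
      rw [Finset.sum_eq_single_of_mem i0 (Finset.mem_univ i0)]
      · rw [hek i0]; field_simp; ring
      · intro k _ hk
        obtain ⟨hk1, _⟩ := hgas k hk
        rw [hek k, hk1]
        field_simp
        ring
    linarith [h1.trans h2]
  have hD : v - (∑ k, Y k * b k)
      = T / p * ((∑ k, Y k * (γ k * Cv k)) - ∑ k, Y k * Cv k)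
        - Y i0 * Cv i0 * (γ i0 - 1) * T * pinf i0 / (p * (p + pinf i0)) := by
    have h0 : T / p * ((∑ k, Y k * (γ k * Cv k)) - ∑ k, Y k * Cv k)
        = ∑ k, T / p * (Y k * (γ k * Cv k) - Y k * Cv k) := by
      rw [← Finset.sum_sub_distrib, Finset.mul_sum]
    have h1 : v - (∑ k, Y k * b k)
          - T / p * ((∑ k, Y k * (γ k * Cv k)) - ∑ k, Y k * Cv k)
        = ∑ k, (Y k * vk k - Y k * b k - T / p * (Y k * (γ k * Cv k) - Y k * Cv k)) := by
      rw [hv, h0, ← Finset.sum_sub_distrib, ← Finset.sum_sub_distrib]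
    have h2 : (∑ k, (Y k * vk k - Y k * b k - T / p * (Y k * (γ k * Cv k) - Y k * Cv k)))
        = -(Y i0 * Cv i0 * (γ i0 - 1) * T * pinf i0 / (p * (p + pinf i0))) := by
      rw [Finset.sum_eq_single_of_mem i0 (Finset.mem_univ i0)]
      · rw [hvk i0]; field_simp; ring
      · intro k _ hk
        obtain ⟨hk1, hk2⟩ := hgas k hk
        rw [hvk k, hk1, hk2]
        field_simp
        ring
    linarith [h1.trans h2]
  set A := ∑ k, Y k * Cv k with hA
  set B := ∑ k, Y k * (γ k * Cv k) with hB
  set E := e - ∑ k, Y k * q k with hEdef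
  set D := v - ∑ k, Y k * b k with hDdef
  set π := pinf i0 with hπ
  set Δ := Y i0 * (γ i0 * Cv i0 - Cv i0) with hΔ
  have key : (A * p ^ 2 + π * (A + Δ) * p) * D
      = E * ((B - A) * p + π * (B - A - Δ)) := by
    rw [hE, hD]
    field_simp
    ring
  have expand : A * p ^ 2 - (E / D * (B - A) - π * A - π * Y i0 * (γ i0 * Cv i0 - Cv i0)) * p
        - E / D * π * (B - A - Y i0 * (γ i0 * Cv i0 - Cv i0))
      = ((A * p ^ 2 + π * (A + Δ) * p) * D - E * ((B - A) * p + π * (B - A - Δ))) / D := by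
    rw [hΔ]
    field_simp
    ring
  rw [expand, key, sub_self, zero_div]
end

section
/- Consider a 1D periodic array of n ≥ 1 cells with states (ρ_i, u_i, p_i, Y_{k,i}, H_i), ρ_i > 0, and piecewise-constant reconstruction (so at each face the left state is cell i and the right state is cell i+1). Suppose u_i = 0 for all i and p_i = p for all i (a stationary contact discontinuity; the mass fractions Y_{k,i} may differ between cells). Then at every face the SLAU mass flux ṁ = ½ρ^L(V^L + |V̄|^L) + ½ρ^R(V^R − |V̄|^R) − θ(χ/c̄)(p^R − p^L) equals 0; consequently the advection flux Ã = ((ṁ + |ṁ|)/2)Ψ^L + ((ṁ − |ṁ|)/2)Ψ^R with Ψ = (Y_1,…,Y_k, u, H)ᵀ vanishes at every face, the residual Res(U)_i = −(Ã_{i+1/2} − Ã_{i−1/2})/Δx vanishes, and the two-stage SSP Runge–Kutta update U* = Uⁿ + Δt Res(Uⁿ), U** = ½(Uⁿ + U* + Δt Res(U*)) leaves every conservative variable unchanged: U** = Uⁿ. (This is the first half of the paper's Proposition that the hybrid method solves the stationary contact discontinuity exactly.) -/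
noncomputable section

/-- Weighted average normal speed |V̄| at the face between cells i and i+1
(piecewise-constant reconstruction: left = cell i, right = cell i+1). -/
def slauVbar {n : ℕ} (ρ u : ZMod n → ℝ) (i : ZMod n) : ℝ :=
  (ρ i * |u i| + ρ (i + 1) * |u (i + 1)|) / (ρ i + ρ (i + 1))

/-- SLAU mass flux ṁ = ½ρ^L(V^L + |V̄|^L) + ½ρ^R(V^R − |V̄|^R) − θ(χ/c̄)(p^R − p^L)
at the face between cells i and i+1, where V = u is the 1D normal velocity,
|V̄|^{L/R} = (1−φ)|V̄| + φ|V^{L/R}|. -/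
def slauMdot {n : ℕ} (ρ u p θ χ φ cbar : ZMod n → ℝ) (i : ZMod n) : ℝ :=
  (1 / 2) * ρ i * (u i + ((1 - φ i) * slauVbar ρ u i + φ i * |u i|))
    + (1 / 2) * ρ (i + 1) * (u (i + 1) - ((1 - φ i) * slauVbar ρ u i + φ i * |u (i + 1)|))
    - θ i * (χ i / cbar i) * (p (i + 1) - p i)

/-- The advected vector Ψ = (Y₁,…,Y_K, u, H)ᵀ of cell i. -/
def slauPsi {n K : ℕ} (Y : Fin K → ZMod n → ℝ) (u H : ZMod n → ℝ) (i : ZMod n) :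
    Fin (K + 2) → ℝ :=
  Fin.append (fun k : Fin K => Y k i) ![u i, H i]

/-- Advection flux Ã = ((ṁ + |ṁ|)/2)Ψ^L + ((ṁ − |ṁ|)/2)Ψ^R at the face
between cells i and i+1. -/
def slauAdvFlux {n K : ℕ} (ρ u p H θ χ φ cbar : ZMod n → ℝ)
    (Y : Fin K → ZMod n → ℝ) (i : ZMod n) : Fin (K + 2) → ℝ :=
  ((slauMdot ρ u p θ χ φ cbar i + |slauMdot ρ u p θ χ φ cbar i|) / 2) • slauPsi Y u H i
    + ((slauMdot ρ u p θ χ φ cbar i - |slauMdot ρ u p θ χ φ cbar i|) / 2)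
        • slauPsi Y u H (i + 1)

/-- **The advection step of the hybrid method preserves a stationary contact.**
On a 1D periodic array of n ≥ 1 cells with piecewise-constant reconstruction,
if u_i = 0 and p_i = p for all i (mass fractions may jump), then the SLAU mass
flux vanishes at every face, the advection flux Ã vanishes at every face, the
residual Res(Uⁿ)_i = −(Ã_{i+1/2} − Ã_{i−1/2})/Δx vanishes, and the two-stage
SSP Runge–Kutta update U* = Uⁿ + Δt Res(Uⁿ),
U** = ½(Uⁿ + U* + Δt Res(U*)) leaves every conservative variable unchanged. -/
theorem stationary_contact_preserved_by_advection_step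
    (n K : ℕ) (hn : 0 < n)
    (ρ u p H E θ χ φ cbar : ZMod n → ℝ) (Y : Fin K → ZMod n → ℝ)
    (pc : ℝ) (Δx Δt : ℝ) (hΔx : 0 < Δx)
    (hρ : ∀ i, 0 < ρ i) (hc : ∀ i, 0 < cbar i)
    (hu : ∀ i, u i = 0) (hp : ∀ i, p i = pc)
    (Un : ZMod n → Fin (K + 2) → ℝ)
    (hUn : ∀ i, Un i = Fin.append (fun k : Fin K => ρ i * Y k i) ![ρ i * u i, ρ i * E i])
    (Res : (ZMod n → Fin (K + 2) → ℝ) → ZMod n → Fin (K + 2) → ℝ)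
    (hRes : Res Un = fun i =>
      (-(Δx)⁻¹) • (slauAdvFlux ρ u p H θ χ φ cbar Y i
                    - slauAdvFlux ρ u p H θ χ φ cbar Y (i - 1))) :
    (∀ i, slauMdot ρ u p θ χ φ cbar i = 0) ∧
    (∀ i, slauAdvFlux ρ u p H θ χ φ cbar Y i = 0) ∧
    (∀ i, Res Un i = 0) ∧
    ((fun i => ((1 : ℝ) / 2) •
        (Un i + (Un i + Δt • Res Un i)
          + Δt • Res (fun j => Un j + Δt • Res Un j) i)) = Un) := by
  have hm : ∀ i, slauMdot ρ u p θ χ φ cbar i = 0 := by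
    intro i
    simp [slauMdot, slauVbar, hu, hp]
  have hA : ∀ i, slauAdvFlux ρ u p H θ χ φ cbar Y i = 0 := by
    intro i
    simp [slauAdvFlux, hm i]
  have hR : ∀ i, Res Un i = 0 := by
    intro i
    rw [hRes]
    simp [hA]
  refine ⟨hm, hA, hR, ?_⟩
  have hfix : (fun j => Un j + Δt • Res Un j) = Un := by
    funext j; rw [hR]; simp
  funext i
  rw [hfix, hR]
  simp
  funext v
  simp [Pi.add_apply, Pi.smul_apply]
  ring

end
end
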